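/- arXiv:2205.03397 — 5 statements merged into one kernel-verified Lean document; each statement's English description precedes it below -/
import Mathlib

section
/- For 0 < β ≤ 1, λ > 0, and any z ∈ ℂ, the Laplace transform of the fractional Poisson measure satisfies Σ_{k=0}^∞ (e^z λ)^k / k! · E_β^{(k)}(-λ) = E_β(λ(e^z - 1)). -/
/-!
For `β > 0` the coefficients `1 / Γ(βn + 1)` of `E_β` decay faster than any geometric sequence,
since `Γ(x + 1) ≥ ⌊x⌋!`; hence `E_β` is entire and equals its Taylor series about `-λ`.
Evaluating that series at `λ(eᶻ - 1)`, whose distance from `-λ` is `eᶻλ`, gives the identity.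
-/

/-- The Mittag-Leffler function `E_β(z) = ∑ zⁿ / Γ(βn+1)`. -/
noncomputable def mittagLeffler (β : ℝ) (z : ℂ) : ℂ :=
  ∑' n : ℕ, z ^ n / Complex.Gamma ((β * n + 1 : ℝ) : ℂ)

open Filter Topology FormalMultilinearSeries

namespace Real

theorem factorial_floor_le_Gamma_add_one {x : ℝ} (hx : 1 ≤ x) :
    (⌊x⌋₊.factorial : ℝ) ≤ Gamma (x + 1) := by
  have hm : (1 : ℝ) ≤ ⌊x⌋₊ := by exact_mod_cast Nat.one_le_floor_iff x |>.mpr hx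
  rw [← Gamma_nat_eq_factorial]
  exact Gamma_strictMonoOn_Ici.monotoneOn (by simp; linarith) (by simp; linarith)
    (by linarith [Nat.floor_le (zero_le_one.trans hx)])

theorem tendsto_rpow_div_Gamma_add_one {a : ℝ} (ha : 0 ≤ a) :
    Tendsto (fun x => a ^ x / Gamma (x + 1)) atTop (𝓝 0) := by
  set A := max a 1
  have hA : 1 ≤ A := le_max_right a 1
  have hbound : ∀ᶠ x in atTop, a ^ x / Gamma (x + 1) ≤ A * (A ^ ⌊x⌋₊ / ⌊x⌋₊.factorial) := by
    filter_upwards [eventually_ge_atTop 1] with x hx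
    have hx0 : 0 ≤ x := zero_le_one.trans hx
    calc a ^ x / Gamma (x + 1) ≤ A ^ (⌊x⌋₊ + 1 : ℝ) / ⌊x⌋₊.factorial := by
          gcongr
          · exact (rpow_le_rpow ha (le_max_left a 1) hx0).trans
              (rpow_le_rpow_of_exponent_le hA (Nat.lt_floor_add_one x).le)
          · exact factorial_floor_le_Gamma_add_one hx
      _ = A * (A ^ ⌊x⌋₊ / ⌊x⌋₊.factorial) := by
          rw [rpow_add_one (by positivity), rpow_natCast]; ring
  have hlim : Tendsto (fun x : ℝ => A * (A ^ ⌊x⌋₊ / ⌊x⌋₊.factorial)) atTop (𝓝 0) := by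
    simpa using ((FloorSemiring.tendsto_pow_div_factorial_atTop A).comp
      tendsto_nat_floor_atTop).const_mul A
  refine squeeze_zero' ?_ hbound hlim
  filter_upwards [eventually_ge_atTop 0] with x hx
  exact div_nonneg (rpow_nonneg ha x) (Gamma_pos_of_pos (by linarith)).le

end Real

noncomputable def mittagLefflerCoeff (β : ℝ) (n : ℕ) : ℂ :=
  (Complex.Gamma ((β * n + 1 : ℝ) : ℂ))⁻¹

theorem mittagLeffler_eq_ofScalarsSum (β : ℝ) :
    mittagLeffler β = ofScalarsSum (E := ℂ) (mittagLefflerCoeff β) := by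
  funext x
  rw [ofScalars_sum_eq, mittagLeffler]
  exact tsum_congr fun n => by rw [smul_eq_mul, mittagLefflerCoeff, div_eq_inv_mul]

theorem radius_ofScalars_mittagLefflerCoeff {β : ℝ} (hβ : 0 < β) :
    (ofScalars ℂ (mittagLefflerCoeff β)).radius = ⊤ := by
  refine radius_eq_top_of_forall_nnreal_isBigO _ fun r => ?_
  have hβn : Tendsto (fun n : ℕ => β * n) atTop atTop :=
    tendsto_natCast_atTop_atTop.const_mul_atTop hβ
  refine Tendsto.isBigO_one ℝ (c := (0 : ℝ)) ?_
  refine ((Real.tendsto_rpow_div_Gamma_add_one (a := (r : ℝ) ^ β⁻¹)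
    (by positivity)).comp hβn).congr fun n => ?_
  -- `rⁿ = (r ^ β⁻¹) ^ (βn)`
  have hΓ : 0 < Real.Gamma (β * n + 1) := Real.Gamma_pos_of_pos (by positivity)
  rw [Function.comp_apply, ← Real.rpow_mul r.coe_nonneg, inv_mul_cancel_left₀ hβ.ne',
    Real.rpow_natCast, ofScalars_norm, mittagLefflerCoeff, Complex.Gamma_ofReal, norm_inv,
    Complex.norm_real, Real.norm_of_nonneg hΓ.le, div_eq_inv_mul]

theorem differentiable_mittagLeffler {β : ℝ} (hβ : 0 < β) :
    Differentiable ℂ (mittagLeffler β) := by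
  have hp := (ofScalars ℂ (mittagLefflerCoeff β)).hasFPowerSeriesOnBall
    (by simp [radius_ofScalars_mittagLefflerCoeff hβ])
  rw [mittagLeffler_eq_ofScalarsSum]
  exact fun x =>
    (hp.analyticAt_of_mem (by simp [radius_ofScalars_mittagLefflerCoeff hβ])).differentiableAt

theorem fracPoisson_laplace_transform_general (β lam : ℝ) (hβ : 0 < β) (z : ℂ) :
    ∑' k : ℕ, (Complex.exp z * lam) ^ k / ((k).factorial : ℂ) *
        iteratedDeriv k (mittagLeffler β) (-(lam : ℂ))
      = mittagLeffler β ((lam : ℂ) * (Complex.exp z - 1)) := by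
  rw [← Complex.taylorSeries_eq_of_entire' (-(lam : ℂ)) _ (differentiable_mittagLeffler hβ)]
  refine tsum_congr fun k => ?_
  rw [show (lam : ℂ) * (Complex.exp z - 1) - -(lam : ℂ) = Complex.exp z * lam by ring]
  ring

/-- Laplace transform of the fractional Poisson measure:
`∑ (eᶻλ)ᵏ/k! · E_β⁽ᵏ⁾(−λ) = E_β(λ(eᶻ − 1))`. -/
theorem fracPoisson_laplace_transform (β lam : ℝ) (hβ : 0 < β) (hβ1 : β ≤ 1)
    (hlam : 0 < lam) (z : ℂ) :
    ∑' k : ℕ, (Complex.exp z * lam) ^ k / ((k).factorial : ℂ) *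
        iteratedDeriv k (mittagLeffler β) (-(lam : ℂ))
      = mittagLeffler β ((lam : ℂ) * (Complex.exp z - 1)) :=
  fracPoisson_laplace_transform_general β lam hβ z
end

section
/- Suppose ν_β is a probability measure on [0,∞) with ∫_0^∞ e^{-τz} dν_β(τ) = E_β(-z) for all z with Re z ≥ 0. Then the mixture measure μ = ∫_0^∞ π_{λτ} dν_β(τ) of Poisson measures π_{λτ} equals the fractional Poisson measure π_{λ,β}, i.e., μ({k}) = (λ^k/k!) E_β^{(k)}(-λ) for all k ∈ ℕ. -/
open MeasureTheory

/-!
The hypothesis says that `z ↦ E_β(z)` agrees with the complex moment generating function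
`z ↦ ∫ e^{zτ} dν(τ)` on the closed left half-plane. Since `ν` lives on `[0, ∞)`, that function is
holomorphic on the open left half-plane, where it may be differentiated under the integral sign:
its `k`-th derivative at `-λ` is `∫ τᵏ e^{-λτ} dν(τ)`. Multiplying by `λᵏ/k!` gives the mass
`∫ π_{λτ}({k}) dν(τ)` of the Poisson mixture.
-/

open ProbabilityTheory Filter Topology

lemma Iio_zero_subset_interior_integrableExpSet_id {ν : Measure ℝ} [IsFiniteMeasure ν]
    (hν : ∀ᵐ τ ∂ν, 0 ≤ τ) : Set.Iio 0 ⊆ interior (integrableExpSet id ν) := by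
  rw [← interior_Iic]
  refine interior_mono fun t (ht : t ≤ 0) => ?_
  refine (integrable_const (1 : ℝ)).mono' (by fun_prop) ?_
  filter_upwards [hν] with τ hτ
  simpa [Real.abs_exp] using mul_nonpos_of_nonpos_of_nonneg ht hτ

lemma iteratedDeriv_complexMGF_id_of_nonneg {ν : Measure ℝ} [IsFiniteMeasure ν]
    (hν : ∀ᵐ τ ∂ν, 0 ≤ τ) {z : ℂ} (hz : z.re < 0) (k : ℕ) :
    iteratedDeriv k (complexMGF id ν) z = ∫ τ, (τ : ℂ) ^ k * Complex.exp (z * τ) ∂ν :=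
  iteratedDeriv_complexMGF (Iio_zero_subset_interior_integrableExpSet_id hν hz) k

theorem fracPoisson_is_poisson_mixture_general (β lam : ℝ)
    (hlam : 0 < lam) (ν : Measure ℝ) [IsProbabilityMeasure ν]
    (hν0 : ν (Set.Iio 0) = 0)
    (hLT : ∀ z : ℂ, 0 ≤ z.re →
      ∫ τ : ℝ, Complex.exp (-(τ : ℂ) * z) ∂ν = mittagLeffler β (-z)) :
    ∀ k : ℕ,
      ∫ τ : ℝ, ((lam * τ : ℝ) : ℂ) ^ k / ((k).factorial : ℂ) * Complex.exp (-((lam * τ : ℝ) : ℂ)) ∂ν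
        = (lam : ℂ) ^ k / ((k).factorial : ℂ) * iteratedDeriv k (mittagLeffler β) (-(lam : ℂ)) := by
  have hν : ∀ᵐ τ ∂ν, 0 ≤ τ := ae_iff.mpr (by simp only [not_le]; exact hν0)
  have hlam' : (-(lam : ℂ)).re < 0 := by simpa using hlam
  have hML : mittagLeffler β =ᶠ[𝓝 (-(lam : ℂ))] complexMGF id ν := by
    filter_upwards [(isOpen_lt Complex.continuous_re continuous_const).mem_nhds hlam']
      with w (hw : w.re < 0)
    rw [← neg_neg w, ← hLT (-w) (by simpa using hw.le)]
    simp [complexMGF, mul_comm]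
  intro k
  rw [hML.iteratedDeriv_eq, iteratedDeriv_complexMGF_id_of_nonneg hν hlam' k,
    ← integral_const_mul]
  refine integral_congr_ae (ae_of_all _ fun τ => ?_)
  push_cast
  rw [neg_mul]
  ring

/-- If `ν_β` is a probability measure on `[0,∞)` whose Laplace transform is `E_β(−·)`,
then the mixture `∫ π_{λτ} dν_β(τ)` of Poisson measures is the fractional Poisson measure:
the mass of each `{k}` is `(λᵏ/k!)·E_β⁽ᵏ⁾(−λ)`. -/
theorem fracPoisson_is_poisson_mixture (β lam : ℝ) (hβ : 0 < β) (hβ1 : β ≤ 1)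
    (hlam : 0 < lam) (ν : Measure ℝ) [IsProbabilityMeasure ν]
    (hν0 : ν (Set.Iio 0) = 0)
    (hLT : ∀ z : ℂ, 0 ≤ z.re →
      ∫ τ : ℝ, Complex.exp (-(τ : ℂ) * z) ∂ν = mittagLeffler β (-z)) :
    ∀ k : ℕ,
      ∫ τ : ℝ, ((lam * τ : ℝ) : ℂ) ^ k / ((k).factorial : ℂ) * Complex.exp (-((lam * τ : ℝ) : ℂ)) ∂ν
        = (lam : ℂ) ^ k / ((k).factorial : ℂ) * iteratedDeriv k (mittagLeffler β) (-(lam : ℂ)) :=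
  fracPoisson_is_poisson_mixture_general β lam hlam ν hν0 hLT
end

section
/- For 0 < β ≤ 1 and λ > 0, the n-th moment of the fractional Poisson measure is m_{λ,β}(n) = Σ_{k=0}^∞ k^n (λ^k/k!) E_β^{(k)}(-λ) = Σ_{m=0}^n m!/Γ(mβ+1) · S(n,m) λ^m, where S(n,m) are the Stirling numbers of the second kind. -/
/-- Stirling numbers of the second kind. -/
def stirling2 : ℕ → ℕ → ℕ
  | 0, 0 => 1
  | 0, _ + 1 => 0
  | _ + 1, 0 => 0
  | n + 1, k + 1 => (k + 1) * stirling2 n (k + 1) + stirling2 n k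

open Finset

theorem stirling2_eq_zero_of_lt : ∀ {n m : ℕ}, n < m → stirling2 n m = 0
  | 0, _ + 1, _ => rfl
  | n + 1, m + 1, h => by
    rw [stirling2, stirling2_eq_zero_of_lt (by omega), stirling2_eq_zero_of_lt (by omega), mul_zero]

theorem Nat.mul_descFactorial_eq_descFactorial_succ_add (x j : ℕ) :
    x * x.descFactorial j = x.descFactorial (j + 1) + j * x.descFactorial j := by
  rcases le_or_gt j x with h | h
  · rw [Nat.descFactorial_succ, ← Nat.add_mul, Nat.sub_add_cancel h]
  · simp [Nat.descFactorial_eq_zero_iff_lt.2 h]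

theorem pow_eq_sum_stirling2_mul_descFactorial (n x : ℕ) :
    x ^ n = ∑ j ∈ range (n + 1), stirling2 n j * x.descFactorial j := by
  induction n with
  | zero => simp [stirling2]
  | succ n ih =>
    have hshift : ∑ j ∈ range (n + 1), j * stirling2 n j * x.descFactorial j
        = ∑ j ∈ range (n + 1), (j + 1) * stirling2 n (j + 1) * x.descFactorial (j + 1) := by
      have := sum_range_succ' (fun j => j * stirling2 n j * x.descFactorial j) (n + 1)
      rw [sum_range_succ, stirling2_eq_zero_of_lt n.lt_succ_self] at this
      simpa using this
    calc x ^ (n + 1)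
        = ∑ j ∈ range (n + 1), (stirling2 n j * x.descFactorial (j + 1)
            + j * stirling2 n j * x.descFactorial j) := by
          rw [pow_succ', ih, mul_sum]
          refine sum_congr rfl fun j _ => ?_
          rw [mul_left_comm, Nat.mul_descFactorial_eq_descFactorial_succ_add]; ring
      _ = ∑ j ∈ range (n + 1), stirling2 (n + 1) (j + 1) * x.descFactorial (j + 1) := by
          rw [sum_add_distrib, hshift, ← sum_add_distrib]
          refine sum_congr rfl fun j _ => ?_
          rw [stirling2]; ring
      _ = ∑ j ∈ range (n + 2), stirling2 (n + 1) j * x.descFactorial j := by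
          rw [sum_range_succ' _ (n + 1)]; simp [stirling2]

theorem fwdDiff_iter_pow_eq_factorial_mul_stirling2 (n m : ℕ) :
    (fwdDiff 1)^[m] (fun x : ℕ => (x : ℤ) ^ n) 0 = (m.factorial * stirling2 n m : ℕ) := by
  have hexpand : (fun x : ℕ => (x : ℤ) ^ n)
      = ∑ j ∈ range (n + 1),
          ((stirling2 n j * j.factorial : ℕ) : ℤ) • fun x : ℕ => (x.choose j : ℤ) := by
    funext x
    rw [← Nat.cast_pow, pow_eq_sum_stirling2_mul_descFactorial]
    simp [Nat.descFactorial_eq_factorial_mul_choose, mul_assoc]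
  rw [hexpand, fwdDiff_iter_finsetSum, Finset.sum_apply]
  simp only [fwdDiff_iter_const_smul, Pi.smul_apply, fwdDiff_iter_choose_zero, smul_eq_mul,
    mul_ite, mul_one, mul_zero, sum_ite_eq, mem_range]
  split_ifs with hm
  · push_cast; ring
  · rw [stirling2_eq_zero_of_lt (by omega)]; simp

theorem sum_neg_one_pow_mul_choose_mul_pow (n m : ℕ) :
    ∑ k ∈ range (m + 1), (-1 : ℤ) ^ (m - k) * m.choose k * (k : ℤ) ^ n
      = (m.factorial * stirling2 n m : ℕ) := by
  rw [← fwdDiff_iter_pow_eq_factorial_mul_stirling2, fwdDiff_iter_eq_sum_shift]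
  simp

theorem sum_pow_mul_choose_mul_pow_mul_neg_pow {R : Type*} [CommRing R] (n m : ℕ) (X : R) :
    ∑ k ∈ range (m + 1), (k : R) ^ n * m.choose k * X ^ k * (-X) ^ (m - k)
      = m.factorial * stirling2 n m * X ^ m := by
  have hterm : ∀ k ∈ range (m + 1), (k : R) ^ n * m.choose k * X ^ k * (-X) ^ (m - k)
      = (((-1 : ℤ) ^ (m - k) * m.choose k * (k : ℤ) ^ n : ℤ) : R) * X ^ m := by
    intro k hk
    rw [neg_pow, ← pow_mul_pow_sub X (Nat.lt_succ_iff.1 (mem_range.1 hk))]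
    push_cast
    ring
  rw [sum_congr rfl hterm, ← sum_mul, ← Int.cast_sum, sum_neg_one_pow_mul_choose_mul_pow]
  push_cast; ring

namespace Real

theorem rpow_le_mul_exp_mul_Gamma {t x : ℝ} (ht : 1 ≤ t) (hx : 1 ≤ x) :
    t ^ x ≤ t * exp t * Gamma (x + 1) := by
  set N := ⌊x⌋₊
  have hN : 1 ≤ N := Nat.le_floor (by simpa using hx)
  have hpow : t ^ x ≤ t ^ (N + 1) := by
    rw [← rpow_natCast]
    exact rpow_le_rpow_of_exponent_le ht (by push_cast; exact (Nat.lt_floor_add_one x).le)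
  have hexp : t ^ N ≤ exp t * N.factorial := by
    have := pow_div_factorial_le_exp t (by linarith) N
    rwa [div_le_iff₀ (by positivity)] at this
  have hGamma : (N.factorial : ℝ) ≤ Gamma (x + 1) := by
    rw [← Gamma_nat_eq_factorial]
    refine Gamma_strictMonoOn_Ici.monotoneOn ?_ ?_
      (by linarith [Nat.floor_le (by linarith : 0 ≤ x)])
    · simp only [Set.mem_Ici]; exact_mod_cast Nat.succ_le_succ hN
    · simp only [Set.mem_Ici]; linarith
  calc t ^ x ≤ t * t ^ N := by rwa [pow_succ'] at hpow
    _ ≤ t * (exp t * Gamma (x + 1)) := by gcongr; exact hexp.trans (by gcongr)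
    _ = t * exp t * Gamma (x + 1) := by ring

theorem summable_Gamma_inv_mul_pow {β : ℝ} (hβ : 0 < β) (R : ℝ) :
    Summable fun m : ℕ => (Gamma (β * m + 1))⁻¹ * R ^ m := by
  set t := (2 * |R| + 1) ^ β⁻¹
  have ht : 1 ≤ t := one_le_rpow (by linarith [abs_nonneg R]) (by positivity)
  refine .of_norm_bounded_eventually_nat (summable_geometric_two.mul_left (t * exp t)) ?_
  filter_upwards [(tendsto_natCast_atTop_atTop.const_mul_atTop hβ).eventually_ge_atTop 1]
    with m hm
  have hΓ : 0 < Gamma (β * m + 1) := Gamma_pos_of_pos (by linarith)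
  have htm : t ^ (β * m) = (2 * |R| + 1) ^ m := by
    rw [← rpow_mul (by positivity), ← mul_assoc, inv_mul_cancel₀ hβ.ne', one_mul, rpow_natCast]
  rw [norm_mul, norm_inv, norm_of_nonneg hΓ.le, norm_pow, norm_eq_abs, inv_mul_le_iff₀ hΓ]
  calc |R| ^ m = (2 * |R|) ^ m * (1 / 2) ^ m := by rw [← mul_pow]; ring
    _ ≤ t ^ (β * m) * (1 / 2) ^ m := by rw [htm]; gcongr; linarith
    _ ≤ t * exp t * Gamma (β * m + 1) * (1 / 2) ^ m := by
        gcongr; exact rpow_le_mul_exp_mul_Gamma ht hm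
    _ = _ := by ring

end Real

theorem summable_mul_choose_of_summable_mul_two_pow {b : ℕ → ℝ} (hb0 : ∀ m, 0 ≤ b m)
    (hb : Summable fun m => b m * 2 ^ m) :
    Summable fun p : ℕ × ℕ => b p.1 * p.1.choose p.2 := by
  have hrow : ∀ m, HasSum (fun k => b m * m.choose k) (b m * 2 ^ m) := by
    intro m
    rw [← Nat.cast_ofNat, ← Nat.cast_pow, ← Nat.sum_range_choose, Nat.cast_sum, mul_sum]
    exact hasSum_sum_of_ne_finset_zero fun k hk => by
      rw [Nat.choose_eq_zero_of_lt (by simpa using hk), Nat.cast_zero, mul_zero]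
  refine (summable_prod_of_nonneg fun p => mul_nonneg (hb0 p.1) (Nat.cast_nonneg _)).2
    ⟨fun m => (hrow m).summable, ?_⟩
  simpa only [(hrow _).tsum_eq] using hb

section EntirePowerSeries

variable {a : ℕ → ℂ}

theorem summable_norm_mul_pow_mul_pow (ha : ∀ R : ℝ, Summable fun m => ‖a m‖ * R ^ m)
    (j : ℕ) (R : ℝ) : Summable fun m : ℕ => ‖a m‖ * (m : ℝ) ^ j * R ^ m := by
  refine .of_norm_bounded (ha (2 ^ j * |R|)) fun m => ?_
  have hm : (m : ℝ) ^ j ≤ (2 ^ j) ^ m := by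
    rw [← pow_mul, mul_comm, pow_mul]
    gcongr
    exact_mod_cast Nat.lt_two_pow_self.le
  rw [norm_mul, norm_mul, norm_norm, norm_pow, norm_pow, Real.norm_natCast, Real.norm_eq_abs,
    mul_pow, ← mul_assoc]
  gcongr

theorem iteratedDeriv_tsum_mul_pow (ha : ∀ R : ℝ, Summable fun m => ‖a m‖ * R ^ m)
    (k : ℕ) (x : ℂ) :
    iteratedDeriv k (fun z => ∑' m, a m * z ^ m) x
      = ∑' m, a m * m.descFactorial k * x ^ (m - k) := by
  have hderiv : ∀ j m, iteratedDerivWithin j (fun z => a m * z ^ m) Set.univ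
      = fun z => a m * m.descFactorial j * z ^ (m - j) := by
    intro j m
    funext z
    rw [iteratedDerivWithin_univ, iteratedDeriv_const_mul_field, iteratedDeriv_pow, mul_assoc]
  rw [← iteratedDerivWithin_univ, iteratedDerivWithin_tsum k isOpen_univ (Set.mem_univ x)]
  · simp only [hderiv]
  · intro z _
    exact .of_norm_bounded (ha ‖z‖) fun m => by rw [norm_mul, norm_pow]
  · intro j _ _
    refine SummableLocallyUniformlyOn_of_locally_bounded isOpen_univ fun K _ hK => ?_
    obtain ⟨R, hR⟩ := hK.isBounded.exists_norm_le
    refine ⟨_, summable_norm_mul_pow_mul_pow ha j (max R 1), fun m z hz => ?_⟩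
    rw [hderiv, norm_mul, norm_mul, norm_pow, Complex.norm_natCast]
    gcongr
    · exact_mod_cast Nat.descFactorial_le_pow m j
    · calc ‖z‖ ^ (m - j) ≤ max R 1 ^ (m - j) := by gcongr; exact (hR z hz).trans (le_max_left _ _)
        _ ≤ max R 1 ^ m := pow_le_pow_right₀ (le_max_right _ _) (Nat.sub_le m j)
  · intro m j r _ _
    rw [hderiv]
    fun_prop

theorem tsum_pow_mul_iteratedDeriv_neg (ha : ∀ R : ℝ, Summable fun m => ‖a m‖ * R ^ m)
    (n : ℕ) (X : ℂ) :
    ∑' k : ℕ, (k : ℂ) ^ n *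
        (X ^ k / k.factorial * iteratedDeriv k (fun z => ∑' m, a m * z ^ m) (-X))
      = ∑' m : ℕ, a m * (m.factorial * stirling2 n m * X ^ m) := by
  set g : ℕ → ℕ → ℂ := fun m k => a m * ((k : ℂ) ^ n * m.choose k * X ^ k * (-X) ^ (m - k))
  have hcol : ∀ k : ℕ, (k : ℂ) ^ n *
      (X ^ k / k.factorial * iteratedDeriv k (fun z => ∑' m, a m * z ^ m) (-X)) = ∑' m, g m k := by
    intro k
    rw [iteratedDeriv_tsum_mul_pow ha, ← tsum_mul_left, ← tsum_mul_left]
    refine tsum_congr fun m => ?_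
    simp only [g]
    have hk : (k.factorial : ℂ) ≠ 0 := Nat.cast_ne_zero.2 k.factorial_ne_zero
    rw [Nat.descFactorial_eq_factorial_mul_choose]
    push_cast
    field_simp
  have hrow : ∀ m, ∑' k, g m k = a m * (m.factorial * stirling2 n m * X ^ m) := by
    intro m
    rw [tsum_eq_sum (s := range (m + 1)) fun k hk => by
      simp [g, Nat.choose_eq_zero_of_lt (by simpa using hk : m < k)],
      ← mul_sum, sum_pow_mul_choose_mul_pow_mul_neg_pow]
  have hg : Summable (Function.uncurry g) := by
    refine .of_norm_bounded (summable_mul_choose_of_summable_mul_two_pow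
      (b := fun m => ‖a m‖ * (m : ℝ) ^ n * ‖X‖ ^ m) (fun m => by positivity)
      ((summable_norm_mul_pow_mul_pow ha n (2 * ‖X‖)).congr fun m => by ring)) fun ⟨m, k⟩ => ?_
    rcases le_or_gt k m with hkm | hkm
    · simp only [Function.uncurry, g, norm_mul, norm_pow, norm_neg, Complex.norm_natCast]
      calc ‖a m‖ * ((k : ℝ) ^ n * m.choose k * ‖X‖ ^ k * ‖X‖ ^ (m - k))
          = ‖a m‖ * (k : ℝ) ^ n * ‖X‖ ^ m * m.choose k := by rw [← pow_mul_pow_sub _ hkm]; ring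
        _ ≤ ‖a m‖ * (m : ℝ) ^ n * ‖X‖ ^ m * m.choose k := by gcongr
    · simp [g, Nat.choose_eq_zero_of_lt hkm]
  rw [tsum_congr hcol, hg.tsum_comm, tsum_congr hrow]

end EntirePowerSeries

theorem fracPoisson_moments_general (β lam : ℝ) (hβ : 0 < β) (n : ℕ) :
    ∑' k : ℕ, (k : ℂ) ^ n *
        ((lam : ℂ) ^ k / ((k).factorial : ℂ) * iteratedDeriv k (mittagLeffler β) (-(lam : ℂ)))
      = ∑ m ∈ Finset.range (n + 1),
          ((m).factorial : ℂ) / Complex.Gamma (((m : ℝ) * β + 1 : ℝ) : ℂ) *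
            (stirling2 n m : ℂ) * (lam : ℂ) ^ m := by
  set a : ℕ → ℂ := fun m => (Complex.Gamma ((β * m + 1 : ℝ) : ℂ))⁻¹
  have ha : ∀ R : ℝ, Summable fun m => ‖a m‖ * R ^ m := by
    intro R
    refine (Real.summable_Gamma_inv_mul_pow hβ R).congr fun m => ?_
    rw [norm_inv, Complex.Gamma_ofReal, Complex.norm_real, Real.norm_of_nonneg
      (Real.Gamma_pos_of_pos (by positivity)).le]
  have hE : mittagLeffler β = fun z => ∑' m, a m * z ^ m := by
    funext z
    exact tsum_congr fun m => div_eq_inv_mul _ _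
  rw [hE, tsum_pow_mul_iteratedDeriv_neg ha, tsum_eq_sum (s := range (n + 1)) fun m hm => by
    rw [stirling2_eq_zero_of_lt (by simpa using hm)]; simp]
  refine sum_congr rfl fun m _ => ?_
  simp only [a, mul_comm (m : ℝ) β]
  ring

/-- Moments of the fractional Poisson measure:
`m_{λ,β}(n) = ∑ₖ kⁿ (λᵏ/k!) E_β⁽ᵏ⁾(−λ) = ∑_{m=0}^n m!/Γ(mβ+1) · S(n,m) λᵐ`. -/
theorem fracPoisson_moments (β lam : ℝ) (hβ : 0 < β) (hβ1 : β ≤ 1) (hlam : 0 < lam) (n : ℕ) :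
    ∑' k : ℕ, (k : ℂ) ^ n *
        ((lam : ℂ) ^ k / ((k).factorial : ℂ) * iteratedDeriv k (mittagLeffler β) (-(lam : ℂ)))
      = ∑ m ∈ Finset.range (n + 1),
          ((m).factorial : ℂ) / Complex.Gamma (((m : ℝ) * β + 1 : ℝ) : ℂ) *
            (stirling2 n m : ℂ) * (lam : ℂ) ^ m :=
  fracPoisson_moments_general β lam hβ n
end

section
/- Define the generalized Charlier kernels C_n^{λ,β}(k) by the expansion (1+u)^k / E_β(λu) = Σ_{n=0}^∞ (u^n/n!) C_n^{λ,β}(k) for u near 0. Then C_n^{λ,β}(k) = Σ_{m=0}^n s(n,m) P_m^{λ,β}(k), where P_m^{λ,β}(k) are the kernels of the expansion e^{sk}/E_β(λ(e^s−1)) = Σ_m (s^m/m!) P_m^{λ,β}(k) and s(n,m) are signed Stirling numbers of the first kind. -/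
/-- Signed Stirling numbers of the first kind: coefficients of the falling factorial. -/
noncomputable def stirling1 (n k : ℕ) : ℤ := (descPochhammer ℤ n).coeff k

/-!
Put `s = log (1 + u)`, so that `e^{sk} / E_β(λ(eˢ - 1)) = (1 + u)ᵏ / E_β(λu)`. The exponential
generating function of the unsigned Stirling numbers is
`fₘ(u) = ∑ₙ |s(n,m)| uⁿ/n! = (-log (1 - u))ᵐ/m!`, since both sides solve `(1 - u) f'ₘ₊₁ = fₘ`,
`fₘ₊₁(0) = 0`; replacing `u` by `-u` gives `∑ₙ s(n,m) uⁿ/n! = log (1 + u)ᵐ/m!`. Substituting this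
into the series of `P` at `log (1 + u)` gives a double series which, by the unsigned identity,
converges absolutely for small `u`. Summed the other way round it is a power series for
`(1 + u)ᵏ / E_β(λu)` with coefficients `∑ₘ s(n,m) Pₘ / n!`, and Taylor coefficients are unique.
-/

open Nat Polynomial FormalMultilinearSeries

theorem stirling1_eq_neg_one_pow_mul_stirlingFirst (n m : ℕ) :
    stirling1 n m = (-1) ^ (n + m) * stirlingFirst n m := by
  induction n generalizing m with
  | zero => cases m <;> simp [stirling1, coeff_one]
  | succ n ih =>
    cases m with
    | zero => simp [stirling1, coeff_zero_eq_eval_zero]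
    | succ m =>
      simp only [stirling1, descPochhammer_succ_right, ← C_eq_natCast, mul_sub, coeff_sub,
        coeff_mul_X, coeff_mul_C] at ih ⊢
      rw [ih, ih, stirlingFirst_succ_succ]
      push_cast
      ring

theorem Nat.stirlingFirst_le_factorial (n m : ℕ) : stirlingFirst n m ≤ n ! := by
  induction n generalizing m with
  | zero => cases m <;> simp
  | succ n ih =>
    cases m with
    | zero => simp
    | succ m =>
      rw [stirlingFirst_succ_succ, factorial_succ, add_mul, one_mul]
      exact add_le_add (Nat.mul_le_mul_left n (ih _)) (ih m)

theorem abs_stirling1 (n m : ℕ) : |stirling1 n m| = stirlingFirst n m := by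
  simp [stirling1_eq_neg_one_pow_mul_stirlingFirst]

section ExponentialGeneratingFunction

variable {a : ℕ → ℂ} {f : ℂ → ℂ} {ε : ℝ}

theorem summable_norm_egf (h : ∀ u : ℂ, ‖u‖ < ε → HasSum (fun n => u ^ n / n ! * a n) (f u))
    {x : ℝ} (hx₀ : 0 ≤ x) (hx : x < ε) : Summable fun n => x ^ n / n ! * ‖a n‖ := by
  refine (summable_norm_iff.mpr (h x ?_).summable).congr fun n => ?_
  · rwa [Complex.norm_real, Real.norm_of_nonneg hx₀]
  · simp [abs_of_nonneg hx₀]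

theorem hasFPowerSeriesOnBall_of_hasSum_egf (hε : 0 < ε)
    (h : ∀ u : ℂ, ‖u‖ < ε → HasSum (fun n => u ^ n / n ! * a n) (f u)) :
    HasFPowerSeriesOnBall f (ofScalars ℂ fun n => a n / n !) 0 (ENNReal.ofReal ε) where
  r_le := by
    refine ENNReal.le_of_forall_nnreal_lt fun ρ hρ => le_radius_of_summable_norm _ ?_
    have hρ' : (ρ : ℝ) < ε := by
      rwa [← ENNReal.ofReal_coe_nnreal, ENNReal.ofReal_lt_ofReal_iff hε] at hρ
    refine (summable_norm_egf h ρ.2 hρ').congr fun n => ?_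
    simp only [NNReal.val_eq_coe, norm_apply_eq_norm_coef, coeff_ofScalars, Complex.norm_div,
      RCLike.norm_natCast]
    ring
  r_pos := by simpa using hε
  hasSum {y} hy := by
    have hy' : ‖y‖ < ε := by
      rwa [Metric.mem_eball, edist_zero_right, ← ofReal_norm,
        ENNReal.ofReal_lt_ofReal_iff hε] at hy
    simpa [ofScalars_apply_eq, mul_div_left_comm, mul_comm] using h y hy'

theorem HasFPowerSeriesOnBall.hasSum_deriv_egf {r : ENNReal}
    (hf : HasFPowerSeriesOnBall f (ofScalars ℂ fun n => a n / n !) 0 r) {u : ℂ}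
    (hu : u ∈ Metric.eball 0 r) :
    HasSum (fun n => u ^ n / n ! * a (n + 1)) (deriv f u) := by
  have := (hf.fderiv.hasSum (by simpa using hu)).mapL (ContinuousLinearMap.apply ℂ ℂ 1)
  simp only [zero_add, ContinuousLinearMap.apply_apply, fderiv_apply_one_eq_deriv,
    apply_eq_pow_smul_coeff] at this
  refine this.congr_fun fun n => ?_
  simp only [_root_.smul_apply, derivSeries_coeff_one, coeff_ofScalars, factorial_succ, cast_mul,
    cast_add, cast_one, nsmul_eq_mul, smul_eq_mul]
  field_simp

theorem eq_of_hasSum_egf {b : ℕ → ℂ}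
    (ha : ∃ ε > 0, ∀ u : ℂ, ‖u‖ < ε → HasSum (fun n => u ^ n / n ! * a n) (f u))
    (hb : ∃ ε > 0, ∀ u : ℂ, ‖u‖ < ε → HasSum (fun n => u ^ n / n ! * b n) (f u)) : a = b := by
  obtain ⟨ε, hε, ha⟩ := ha
  obtain ⟨δ, hδ, hb⟩ := hb
  have := (hasFPowerSeriesOnBall_of_hasSum_egf hε ha).hasFPowerSeriesAt.eq_formalMultilinearSeries
    (hasFPowerSeriesOnBall_of_hasSum_egf hδ hb).hasFPowerSeriesAt
  funext n
  simpa [factorial_ne_zero] using congrFun (ofScalars_series_injective ℂ ℂ this) n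

theorem HasSum.egf_natCast_mul {u S : ℂ} (h : HasSum (fun n => u ^ n / n ! * a (n + 1)) S) :
    HasSum (fun n => u ^ n / n ! * (n * a n)) (u * S) := by
  refine (hasSum_nat_add_iff' 1).mp ?_
  simp only [Finset.range_one, Finset.sum_singleton, CharP.cast_eq_zero, zero_mul, mul_zero,
    sub_zero]
  refine (h.mul_left u).congr_fun fun n => ?_
  rw [factorial_succ]
  push_cast
  field_simp
  ring

end ExponentialGeneratingFunction

theorem summable_egf_stirlingFirst (m : ℕ) {u : ℂ} (hu : ‖u‖ < 1) :
    Summable fun n => u ^ n / n ! * (stirlingFirst n m : ℂ) := by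
  refine Summable.of_norm_bounded (summable_geometric_of_lt_one (norm_nonneg u) hu) fun n => ?_
  rw [norm_mul, norm_div, norm_pow, Complex.norm_natCast, Complex.norm_natCast, div_mul_eq_mul_div,
    div_le_iff₀ (by positivity)]
  exact mul_le_mul_of_nonneg_left (mod_cast stirlingFirst_le_factorial n m) (by positivity)

theorem hasDerivAt_neg_log_one_sub_pow_div_factorial (m : ℕ) {u : ℂ} (hu : ‖u‖ < 1) :
    HasDerivAt (fun v => (-Complex.log (1 - v)) ^ (m + 1) / (m + 1)! )
      ((-Complex.log (1 - u)) ^ m / m ! / (1 - u)) u := by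
  have hlog : HasDerivAt (fun v => -Complex.log (1 - v)) (1 / (1 - u)) u := by
    have hmem : 1 - u ∈ Complex.slitPlane := by
      simpa [sub_eq_add_neg] using
        Complex.mem_slitPlane_of_norm_lt_one (z := -u) (by simpa using hu)
    simpa [neg_div] using (((hasDerivAt_id u).const_sub 1).clog hmem).fun_neg
  refine ((hlog.fun_pow (m + 1)).div_const ((m + 1)! : ℂ)).congr_deriv ?_
  rw [factorial_succ]
  push_cast
  field_simp

theorem hasSum_stirlingFirst_egf (m : ℕ) {u : ℂ} (hu : ‖u‖ < 1) :
    HasSum (fun n => u ^ n / n ! * (stirlingFirst n m : ℂ)) ((-Complex.log (1 - u)) ^ m / m !) := by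
  induction m generalizing u with
  | zero =>
    convert hasSum_single (f := fun n => u ^ n / n ! * (stirlingFirst n 0 : ℂ)) 0 fun n hn => ?_
    · simp
    · obtain ⟨n, rfl⟩ := exists_eq_succ_of_ne_zero hn
      simp
  | succ m ih =>
    set f : ℂ → ℂ := fun v => ∑' n, v ^ n / n ! * (stirlingFirst n (m + 1) : ℂ)
    have hf (v : ℂ) (hv : ‖v‖ < 1) :
        HasSum (fun n => v ^ n / n ! * (stirlingFirst n (m + 1) : ℂ)) (f v) :=
      (summable_egf_stirlingFirst (m + 1) hv).hasSum
    have hF := hasFPowerSeriesOnBall_of_hasSum_egf one_pos hf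
    rw [ENNReal.ofReal_one] at hF
    have hderiv (v : ℂ) (hv : ‖v‖ < 1) :
        deriv f v = (-Complex.log (1 - v)) ^ m / m ! / (1 - v) := by
      have h₁ := hF.hasSum_deriv_egf (by simpa [← ofReal_norm] using hv)
      have h₂ := h₁.sub (h₁.egf_natCast_mul (a := fun n => (stirlingFirst n (m + 1) : ℂ)))
      simp only [← mul_sub, stirlingFirst_succ_succ, cast_add, cast_mul, add_sub_cancel_left] at h₂
      rw [eq_div_iff (sub_ne_zero.mpr (by rintro rfl; simp at hv)), (ih hv).unique h₂]
      ring
    have hg (v : ℂ) (hv : v ∈ Metric.ball 0 1) :=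
      hasDerivAt_neg_log_one_sub_pow_div_factorial m (mem_ball_zero_iff.mp hv)
    have hfd : DifferentiableOn ℂ f (Metric.ball 0 1) := by
      simpa [← Metric.eball_ofReal] using hF.differentiableOn
    have heq := Metric.isOpen_ball.eqOn_of_deriv_eq (convex_ball (0 : ℂ) 1).isPreconnected hfd
      (fun v hv => (hg v hv).differentiableAt.differentiableWithinAt)
      (fun v hv => by rw [hderiv v (mem_ball_zero_iff.mp hv), (hg v hv).deriv])
      (Metric.mem_ball_self one_pos) (by simp [f, zero_pow_eq, ite_div, ite_mul])
    simpa [heq (mem_ball_zero_iff.mpr hu)] using hf u hu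

theorem hasSum_stirling1_egf (m : ℕ) {u : ℂ} (hu : ‖u‖ < 1) :
    HasSum (fun n => u ^ n / n ! * (stirling1 n m : ℂ)) (Complex.log (1 + u) ^ m / m !) := by
  have h := (hasSum_stirlingFirst_egf m (u := -u) (by simpa using hu)).mul_left ((-1) ^ m)
  rw [sub_neg_eq_add, neg_pow (Complex.log _), mul_div_assoc, ← mul_assoc, ← mul_pow,
    neg_one_mul, neg_neg, one_pow, one_mul] at h
  refine h.congr_fun fun n => ?_
  rw [stirling1_eq_neg_one_pow_mul_stirlingFirst, neg_pow u, pow_add]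
  push_cast
  ring

theorem hasSum_stirlingFirst_egf_real (m : ℕ) {x : ℝ} (hx₀ : 0 ≤ x) (hx : x < 1) :
    HasSum (fun n => x ^ n / n ! * (stirlingFirst n m : ℝ)) ((-Real.log (1 - x)) ^ m / m !) := by
  rw [← Complex.hasSum_ofReal]
  push_cast
  rw [Complex.ofReal_log (by linarith)]
  push_cast
  exact hasSum_stirlingFirst_egf m (by rwa [Complex.norm_real, Real.norm_of_nonneg hx₀])

theorem norm_log_one_add_le_neg_log_one_sub {u : ℂ} (hu : ‖u‖ < 1) :
    ‖Complex.log (1 + u)‖ ≤ -Real.log (1 - ‖u‖) := by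
  simpa using (hasSum_stirling1_egf 1 hu).norm_le_of_bounded
    (hasSum_stirlingFirst_egf_real 1 (norm_nonneg u) hu) fun n => by
      simp [← Int.cast_abs, abs_stirling1]

theorem hasSum_egf_stirling1_comp {P : ℕ → ℂ} {F : ℂ → ℂ} {ε : ℝ}
    (hP : ∀ s : ℂ, ‖s‖ < ε → HasSum (fun m => s ^ m / m ! * P m) (F (Complex.exp s - 1)))
    {u : ℂ} (hu : ‖u‖ < 1) (hε : -Real.log (1 - ‖u‖) < ε) :
    HasSum (fun n => u ^ n / n ! * ∑ m ∈ Finset.range (n + 1), (stirling1 n m : ℂ) * P m)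
      (F u) := by
  -- for fixed `m`, the sum over `n` is the `m`-th term of the series of `P` at `log (1 + u)`;
  -- for fixed `n`, only `m ≤ n` contribute
  set g : ℕ × ℕ → ℂ := fun p => u ^ p.2 / p.2 ! * (stirling1 p.2 p.1 * P p.1)
  have hx₀ : 0 ≤ -Real.log (1 - ‖u‖) :=
    neg_nonneg.mpr (Real.log_nonpos (by linarith) (by linarith [norm_nonneg u]))
  have hrow (m : ℕ) : HasSum (fun n => g (m, n)) (Complex.log (1 + u) ^ m / m ! * P m) :=
    ((hasSum_stirling1_egf m hu).mul_right (P m)).congr_fun fun n => by simp only [g]; ring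
  have hrow_norm (m : ℕ) :
      HasSum (fun n => ‖g (m, n)‖) ((-Real.log (1 - ‖u‖)) ^ m / m ! * ‖P m‖) :=
    ((hasSum_stirlingFirst_egf_real m (norm_nonneg u) hu).mul_right ‖P m‖).congr_fun fun n => by
      simp only [g, Complex.norm_mul, Complex.norm_div, norm_pow, RCLike.norm_natCast,
        Complex.norm_intCast, ← Int.cast_abs, abs_stirling1, Int.cast_natCast]
      ring
  have hg : Summable g := Summable.of_norm <|
    (summable_prod_of_nonneg fun _ => norm_nonneg _).mpr ⟨fun m => (hrow_norm m).summable,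
      (summable_norm_egf hP hx₀ hε).congr fun m => (hrow_norm m).tsum_eq.symm⟩
  have hsum : HasSum g (F u) := by
    have h := hP _ ((norm_log_one_add_le_neg_log_one_sub hu).trans_lt hε)
    rw [Complex.exp_log (Complex.slitPlane_ne_zero (Complex.mem_slitPlane_of_norm_lt_one hu)),
      add_sub_cancel_left] at h
    rw [h.unique (hg.hasSum.prod_fiberwise hrow)]
    exact hg.hasSum
  have hcol (n : ℕ) : HasSum (fun m => g (m, n))
      (u ^ n / n ! * ∑ m ∈ Finset.range (n + 1), (stirling1 n m : ℂ) * P m) := by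
    rw [Finset.mul_sum]
    refine hasSum_sum_of_ne_finset_zero fun m hm => ?_
    have := stirlingFirst_eq_zero_of_lt (n := n) (k := m) (by simpa using hm)
    simp [g, stirling1_eq_neg_one_pow_mul_stirlingFirst, this]
  exact ((Equiv.prodComm ℕ ℕ).hasSum_iff.mpr hsum).prod_fiberwise hcol

theorem exists_hasSum_egf_stirling1_comp {P : ℕ → ℂ} {F : ℂ → ℂ}
    (hP : ∃ ε > 0, ∀ s : ℂ, ‖s‖ < ε →
      HasSum (fun m => s ^ m / m ! * P m) (F (Complex.exp s - 1))) :
    ∃ δ > 0, ∀ u : ℂ, ‖u‖ < δ →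
      HasSum (fun n => u ^ n / n ! * ∑ m ∈ Finset.range (n + 1), (stirling1 n m : ℂ) * P m)
        (F u) := by
  obtain ⟨ε, hε, hP⟩ := hP
  refine ⟨1 - Real.exp (-ε), by simpa using hε, fun u hu => ?_⟩
  have hu₁ : ‖u‖ < 1 := hu.trans (by simpa using Real.exp_pos (-ε))
  refine hasSum_egf_stirling1_comp hP hu₁ (neg_lt.mp ?_)
  rw [Real.lt_log_iff_exp_lt (by linarith)]
  linarith

theorem charlier_kernels_stirling_first_general (β lam : ℝ) (C P : ℕ → ℕ → ℂ)
    (hC : ∀ k : ℕ, ∃ ε > (0 : ℝ), ∀ u : ℂ, ‖u‖ < ε →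
      HasSum (fun n : ℕ => u ^ n / ((n).factorial : ℂ) * C n k)
        ((1 + u) ^ k / mittagLeffler β ((lam : ℂ) * u)))
    (hP : ∀ k : ℕ, ∃ ε > (0 : ℝ), ∀ s : ℂ, ‖s‖ < ε →
      HasSum (fun m : ℕ => s ^ m / ((m).factorial : ℂ) * P m k)
        (Complex.exp (s * k) / mittagLeffler β ((lam : ℂ) * (Complex.exp s - 1)))) :
    ∀ n k : ℕ, C n k = ∑ m ∈ Finset.range (n + 1), ((stirling1 n m : ℤ) : ℂ) * P m k := by
  intro n k
  refine congrFun (eq_of_hasSum_egf (hC k) (exists_hasSum_egf_stirling1_comp ?_)) n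
  obtain ⟨ε, hε, h⟩ := hP k
  refine ⟨ε, hε, fun s hs => ?_⟩
  convert h s hs using 2
  simp [← Complex.exp_nat_mul, mul_comm]

/-- The generalized Charlier kernels `Cₙ^{λ,β}`, defined by the expansion of the
modified Wick exponential `(1+u)ᵏ/E_β(λu)`, satisfy
`Cₙ^{λ,β}(k) = ∑ₘ s(n,m) Pₘ^{λ,β}(k)` where `Pₘ^{λ,β}` are the kernels of
`e^{sk}/E_β(λ(eˢ−1))`. -/
theorem charlier_kernels_stirling_first (β lam : ℝ) (hβ : 0 < β) (hβ1 : β ≤ 1)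
    (hlam : 0 < lam) (C P : ℕ → ℕ → ℂ)
    (hC : ∀ k : ℕ, ∃ ε > (0 : ℝ), ∀ u : ℂ, ‖u‖ < ε →
      HasSum (fun n : ℕ => u ^ n / ((n).factorial : ℂ) * C n k)
        ((1 + u) ^ k / mittagLeffler β ((lam : ℂ) * u)))
    (hP : ∀ k : ℕ, ∃ ε > (0 : ℝ), ∀ s : ℂ, ‖s‖ < ε →
      HasSum (fun m : ℕ => s ^ m / ((m).factorial : ℂ) * P m k)
        (Complex.exp (s * k) / mittagLeffler β ((lam : ℂ) * (Complex.exp s - 1)))) :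
    ∀ n k : ℕ, C n k = ∑ m ∈ Finset.range (n + 1), ((stirling1 n m : ℤ) : ℂ) * P m k :=
  charlier_kernels_stirling_first_general β lam C P hC hP
end

section
/- For 0 < β < 1, the map φ ↦ E_β(∫(e^{iφ(x)} − 1) dσ(x)) on a nuclear test function space is positive definite: for all φ₁,...,φ_n in the test space and z₁,...,z_n ∈ ℂ, Σ_{k,j} E_β(∫(e^{i(φ_k−φ_j)(x)} − 1) dσ(x)) z_k conj(z_j) ≥ 0, provided E_β(−z) = ∫_0^∞ e^{−τz} dν_β(τ) for a probability measure ν_β on [0,∞) and the Poisson characteristic functional exp(τ∫(e^{iφ} − 1)dσ) is positive definite for each τ ≥ 0. -/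
open MeasureTheory

/-! Write `A_{kj} = ∫(e^{i(φ_k − φ_j)} − 1)dσ`. Since `Re A_{kj} ≤ 0`, complete monotonicity gives
`E_β(A_{kj}) = ∫ e^{τ A_{kj}} dν(τ)` with `ν` carried by `[0, ∞)`, where `|e^{τ A_{kj}}| ≤ 1`. So the
matrix `E_β(A_{kj})` is a `ν`-mixture of the Poisson matrices `e^{τ A_{kj}}`, and positive
semidefiniteness of the quadratic form survives integration in `τ`. -/

section

open Complex ComplexConjugate ComplexOrder

variable {α : Type*} [MeasurableSpace α] {μ : Measure α}

lemma re_integral_exp_I_mul_sub_one_nonpos (μ : Measure α) (f : α → ℝ) :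
    (∫ x, (exp (I * f x) - 1) ∂μ).re ≤ 0 := by
  by_cases hint : Integrable (fun x => exp (I * f x) - 1) μ
  · rw [← reCLM_apply, ← reCLM.integral_comp_comm hint]
    refine integral_nonpos fun x => ?_
    simpa [mul_comm I, exp_ofReal_mul_I_re] using Real.cos_le_one (f x)
  · simp [integral_undef hint]

lemma re_nonneg_and_im_eq_zero_integral {g : α → ℂ}
    (hg : ∀ᵐ t ∂μ, 0 ≤ (g t).re ∧ (g t).im = 0) :
    0 ≤ (∫ t, g t ∂μ).re ∧ (∫ t, g t ∂μ).im = 0 := by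
  have hnonneg : 0 ≤ ∫ t, g t ∂μ :=
    integral_nonneg_of_ae <| hg.mono fun t ht => nonneg_iff.2 ⟨ht.1, ht.2.symm⟩
  exact ⟨(nonneg_iff.1 hnonneg).1, (nonneg_iff.1 hnonneg).2.symm⟩

lemma integral_sum_sum_mul_mul_conj {ι : Type*} [Fintype ι] {F : ι → ι → α → ℂ}
    (hF : ∀ k j, Integrable (F k j) μ) (z : ι → ℂ) :
    ∫ t, ∑ k, ∑ j, F k j t * z k * conj (z j) ∂μ
      = ∑ k, ∑ j, (∫ t, F k j t ∂μ) * z k * conj (z j) := by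
  have hterm : ∀ k j, Integrable (fun t => F k j t * z k * conj (z j)) μ :=
    fun k j => ((hF k j).mul_const _).mul_const _
  rw [integral_finsetSum _ fun k _ => integrable_finsetSum _ fun j _ => hterm k j]
  refine Finset.sum_congr rfl fun k _ => ?_
  rw [integral_finsetSum _ fun j _ => hterm k j]
  simp_rw [integral_mul_const]

lemma norm_exp_ofReal_mul_le_one {τ : ℝ} {w : ℂ} (hτ : 0 ≤ τ) (hw : w.re ≤ 0) :
    ‖exp (τ * w)‖ ≤ 1 := by
  rw [norm_exp, Real.exp_le_one_iff, re_ofReal_mul]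
  exact mul_nonpos_of_nonneg_of_nonpos hτ hw

variable {ν : Measure ℝ}

lemma ae_nonneg_of_measure_Iio_eq_zero (hν0 : ν (Set.Iio 0) = 0) : ∀ᵐ τ ∂ν, 0 ≤ τ := by
  rw [ae_iff]
  simp only [not_le]
  exact hν0

lemma integrable_exp_ofReal_mul [IsFiniteMeasure ν] (hν0 : ν (Set.Iio 0) = 0) {w : ℂ}
    (hw : w.re ≤ 0) : Integrable (fun τ : ℝ => exp (τ * w)) ν :=
  Integrable.of_bound (by fun_prop) 1 <|
    (ae_nonneg_of_measure_Iio_eq_zero hν0).mono fun _ hτ => norm_exp_ofReal_mul_le_one hτ hw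

lemma mittagLeffler_eq_integral_exp {β : ℝ}
    (hML : ∀ z : ℂ, 0 ≤ z.re → ∫ τ : ℝ, exp (-(τ : ℂ) * z) ∂ν = mittagLeffler β (-z))
    {w : ℂ} (hw : w.re ≤ 0) : mittagLeffler β w = ∫ τ : ℝ, exp (τ * w) ∂ν := by
  simpa using (hML (-w) (by simpa using hw)).symm

end

theorem fracPoisson_characteristic_functional_posDef_general (d : ℕ) (β : ℝ)
    (σ : Measure (Fin d → ℝ)) (ν : Measure ℝ) [IsProbabilityMeasure ν]
    (hν0 : ν (Set.Iio 0) = 0)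
    (hML : ∀ z : ℂ, 0 ≤ z.re →
      ∫ τ : ℝ, Complex.exp (-(τ : ℂ) * z) ∂ν = mittagLeffler β (-z))
    (hPD : ∀ τ : ℝ, 0 ≤ τ → ∀ (n : ℕ) (φ : Fin n → (Fin d → ℝ) → ℝ) (z : Fin n → ℂ),
      0 ≤ (∑ k : Fin n, ∑ j : Fin n,
          Complex.exp ((τ : ℂ) *
            ∫ x, (Complex.exp (Complex.I * ((φ k x - φ j x : ℝ) : ℂ)) - 1) ∂σ)
            * z k * (starRingEnd ℂ) (z j)).re ∧
        (∑ k : Fin n, ∑ j : Fin n,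
          Complex.exp ((τ : ℂ) *
            ∫ x, (Complex.exp (Complex.I * ((φ k x - φ j x : ℝ) : ℂ)) - 1) ∂σ)
            * z k * (starRingEnd ℂ) (z j)).im = 0)
    (n : ℕ) (φ : Fin n → (Fin d → ℝ) → ℝ) (z : Fin n → ℂ) :
    0 ≤ (∑ k : Fin n, ∑ j : Fin n,
        mittagLeffler β
            (∫ x, (Complex.exp (Complex.I * ((φ k x - φ j x : ℝ) : ℂ)) - 1) ∂σ)
          * z k * (starRingEnd ℂ) (z j)).re ∧
      (∑ k : Fin n, ∑ j : Fin n,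
        mittagLeffler β
            (∫ x, (Complex.exp (Complex.I * ((φ k x - φ j x : ℝ) : ℂ)) - 1) ∂σ)
          * z k * (starRingEnd ℂ) (z j)).im = 0 := by
  set A : Fin n → Fin n → ℂ := fun k j =>
    ∫ x, (Complex.exp (Complex.I * ((φ k x - φ j x : ℝ) : ℂ)) - 1) ∂σ
  have hA : ∀ k j, (A k j).re ≤ 0 := fun k j =>
    re_integral_exp_I_mul_sub_one_nonpos σ fun x => φ k x - φ j x
  have hmixture : ∑ k, ∑ j, mittagLeffler β (A k j) * z k * (starRingEnd ℂ) (z j)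
      = ∫ τ : ℝ, ∑ k, ∑ j, Complex.exp (τ * A k j) * z k * (starRingEnd ℂ) (z j) ∂ν := by
    rw [integral_sum_sum_mul_mul_conj fun k j => integrable_exp_ofReal_mul hν0 (hA k j)]
    simp_rw [mittagLeffler_eq_integral_exp hML (hA _ _)]
  rw [hmixture]
  exact re_nonneg_and_im_eq_zero_integral <|
    (ae_nonneg_of_measure_Iio_eq_zero hν0).mono fun τ hτ => hPD τ hτ n φ z

/-- For `0 < β < 1`, the functional `φ ↦ E_β(∫(e^{iφ} − 1)dσ)` is positive definite,
assuming complete monotonicity of `E_β` (mixing representation by a probability measure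
`ν_β` on `[0,∞)`) and positive definiteness of the Poisson characteristic functional
`exp(τ∫(e^{iφ} − 1)dσ)` for each `τ ≥ 0`. Positive definiteness of the (complex-valued)
double sum is expressed as: nonnegative real part and vanishing imaginary part. -/
theorem fracPoisson_characteristic_functional_posDef (d : ℕ) (β : ℝ)
    (hβ : 0 < β) (hβ1 : β < 1)
    (σ : Measure (Fin d → ℝ)) (ν : Measure ℝ) [IsProbabilityMeasure ν]
    (hν0 : ν (Set.Iio 0) = 0)
    (hML : ∀ z : ℂ, 0 ≤ z.re →
      ∫ τ : ℝ, Complex.exp (-(τ : ℂ) * z) ∂ν = mittagLeffler β (-z))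
    (hPD : ∀ τ : ℝ, 0 ≤ τ → ∀ (n : ℕ) (φ : Fin n → (Fin d → ℝ) → ℝ) (z : Fin n → ℂ),
      0 ≤ (∑ k : Fin n, ∑ j : Fin n,
          Complex.exp ((τ : ℂ) *
            ∫ x, (Complex.exp (Complex.I * ((φ k x - φ j x : ℝ) : ℂ)) - 1) ∂σ)
            * z k * (starRingEnd ℂ) (z j)).re ∧
        (∑ k : Fin n, ∑ j : Fin n,
          Complex.exp ((τ : ℂ) *
            ∫ x, (Complex.exp (Complex.I * ((φ k x - φ j x : ℝ) : ℂ)) - 1) ∂σ)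
            * z k * (starRingEnd ℂ) (z j)).im = 0)
    (n : ℕ) (φ : Fin n → (Fin d → ℝ) → ℝ) (z : Fin n → ℂ) :
    0 ≤ (∑ k : Fin n, ∑ j : Fin n,
        mittagLeffler β
            (∫ x, (Complex.exp (Complex.I * ((φ k x - φ j x : ℝ) : ℂ)) - 1) ∂σ)
          * z k * (starRingEnd ℂ) (z j)).re ∧
      (∑ k : Fin n, ∑ j : Fin n,
        mittagLeffler β
            (∫ x, (Complex.exp (Complex.I * ((φ k x - φ j x : ℝ) : ℂ)) - 1) ∂σ)
          * z k * (starRingEnd ℂ) (z j)).im = 0 :=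
  fracPoisson_characteristic_functional_posDef_general d β σ ν hν0 hML hPD n φ z
end
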